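/- With ρ = 1 - √β and L = 2^{32√β}, for all β ∈ (0, 1/15] it holds that ρ³ + (1-ρ)³/(2L²) ≤ (1-β)². -/
import Mathlib


/-- With sparsity `ρ = 1 - √β` and quantization levels `L = 2^{32√β}`, the
combined compression divergence factor is bounded by `(1 - β)²` for all
`β ∈ (0, 1/15]`. -/
theorem stmt_19 (β : ℝ) (hβ0 : 0 < β) (hβ : β ≤ 1 / 15)
    (ρ L : ℝ) (hρ : ρ = 1 - Real.sqrt β)
    (hL : L = (2:ℝ) ^ (32 * Real.sqrt β)) :
    ρ ^ 3 + (1 - ρ) ^ 3 / (2 * L ^ 2) ≤ (1 - β) ^ 2 := by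
  set s := Real.sqrt β with hs
  have hs0 : 0 ≤ s := Real.sqrt_nonneg β
  have hs2 : s ^ 2 = β := Real.sq_sqrt hβ0.le
  have hL1 : (1:ℝ) ≤ L := by
    rw [hL]
    exact Real.one_le_rpow one_le_two (by positivity)
  have hL2 : (2:ℝ) ≤ 2 * L ^ 2 := by nlinarith
  have h1 : (1 - ρ) ^ 3 / (2 * L ^ 2) ≤ (1 - ρ) ^ 3 / 2 := by
    apply div_le_div_of_nonneg_left _ two_pos hL2
    rw [hρ]; ring_nf; positivity
  have hsle : s ≤ 1 / 3 := by nlinarith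
  have key : (1 - s) ^ 3 + s ^ 3 / 2 ≤ (1 - s ^ 2) ^ 2 := by nlinarith
  calc ρ ^ 3 + (1 - ρ) ^ 3 / (2 * L ^ 2) ≤ ρ ^ 3 + (1 - ρ) ^ 3 / 2 := by linarith
    _ ≤ (1 - β) ^ 2 := by rw [hρ, ← hs2]; simpa using key
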